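/- arXiv:2601.05119 — 2 statements merged into one kernel-verified Lean document; each statement's English description precedes it below -/
import Mathlib

section
/- Let M be a loopless matroid on a finite ground set E, B a building set for M, and X, Z ∈ B such that {X, Z} ∪ max(B) is nested and X and Z are incomparable under inclusion. Then (X ∨ Z) ∖ Z = X, where X ∨ Z is the closure of X ∪ Z in M. -/
open Set Matroid
open scoped Matroid

variable {α : Type*}

/-- Two sets are incomparable under inclusion. -/
def Incomp (X Y : Set α) : Prop := ¬ X ⊆ Y ∧ ¬ Y ⊆ X

/-- The inclusion-maximal elements of a family of sets. -/
def maxB (B : Set (Set α)) : Set (Set α) := {X ∈ B | ∀ Y ∈ B, X ⊆ Y → X = Y}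

/-- The rank of a set in a matroid: the largest size of an independent subset. -/
noncomputable def mrank (M : Matroid α) (X : Set α) : ℕ :=
  sSup {n : ℕ | ∃ I ⊆ X, M.Indep I ∧ I.ncard = n}

/-- A matroid is loopless if every singleton of the ground set is independent. -/
def MLoopless (M : Matroid α) : Prop := ∀ e ∈ M.E, M.Indep {e}

/-- A matroid is connected if its rank function is not additive over any
separation of the ground set into two nonempty parts. -/
def MConnected (M : Matroid α) : Prop :=
  ∀ A B : Set α, A ∪ B = M.E → Disjoint A B → A.Nonempty → B.Nonempty →
    mrank M A + mrank M B ≠ mrank M M.E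

/-- A building set for a matroid `M`: a set of nonempty flats containing all nonempty
flats whose restriction is connected, and closed under joins of intersecting members. -/
def IsBuildingSet (M : Matroid α) (B : Set (Set α)) : Prop :=
  (∀ X ∈ B, M.IsFlat X ∧ X.Nonempty) ∧
  (∀ X, M.IsFlat X → X.Nonempty → MConnected (M.restrict X) → X ∈ B) ∧
  (∀ X ∈ B, ∀ Y ∈ B, (X ∩ Y).Nonempty → M.closure (X ∪ Y) ∈ B)

/-- A nested set of a building set `B`. -/
def IsNested (M : Matroid α) (B N : Set (Set α)) : Prop :=
  N ⊆ B ∧ maxB B ⊆ N ∧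
  ∀ S : Set (Set α), S ⊆ N → S.Nontrivial → S.Pairwise Incomp →
    M.closure (⋃₀ S) ∉ B

/-- An inclusion-maximal nested set. -/
def IsMaxNested (M : Matroid α) (B N : Set (Set α)) : Prop :=
  IsNested M B N ∧ ∀ N', IsNested M B N' → N ⊆ N' → N' = N

/-- An atom of a matroid: a rank-one flat. -/
def IsAtomFlat (M : Matroid α) (A : Set α) : Prop := M.IsFlat A ∧ mrank M A = 1

/-- Atoms are compared by their least elements. -/
def atomLE [Preorder α] (A A' : Set α) : Prop :=
  ∃ a a', IsLeast A a ∧ IsLeast A' a' ∧ a ≤ a'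

/-- Strict comparison of atoms by their least elements. -/
def atomLT [Preorder α] (A A' : Set α) : Prop :=
  ∃ a a', IsLeast A a ∧ IsLeast A' a' ∧ a < a'

/-- `A` is an admissible label for `X` within the family `S`:
an atom contained in `X` but in no member of `S` properly below `X`. -/
def GoodLabel (M : Matroid α) (S : Set (Set α)) (X A : Set α) : Prop :=
  IsAtomFlat M A ∧ A ⊆ X ∧ ∀ Y ∈ S, Y ⊂ X → ¬ A ⊆ Y

/-- `A` is the label `m_S(X)`: the least admissible label for `X` within `S`. -/
def IsMinLabel [Preorder α] (M : Matroid α) (S : Set (Set α)) (X A : Set α) : Prop :=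
  GoodLabel M S X A ∧ ∀ A', GoodLabel M S X A' → atomLE A A'

/-- `NLListing M N R L` : `L` is the NL-listing of the remaining family `R`
(labels computed with respect to the whole family `N`), obtained by repeatedly
plucking the inclusion-minimal member with least label. -/
inductive NLListing [Preorder α] (M : Matroid α) (N : Set (Set α)) :
    Set (Set α) → List (Set α × Set α) → Prop
  | nil : NLListing M N ∅ []
  | cons {R : Set (Set α)} {X A : Set α} {L : List (Set α × Set α)} :
      X ∈ R →
      (∀ Y ∈ R, Y ⊆ X → Y = X) →
      IsMinLabel M N X A →
      (∀ Y ∈ R, (∀ W ∈ R, W ⊆ Y → W = Y) → ∀ A', IsMinLabel M N Y A' → atomLE A A') →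
      NLListing M N (R \ {X}) L →
      NLListing M N R ((X, A) :: L)

/-- A descent of a list of atoms at position `i`. -/
def HasDescentAt [Preorder α] (L : List (Set α)) (i : ℕ) : Prop :=
  ∃ h : i + 1 < L.length, atomLT (L.get ⟨i + 1, h⟩) (L.get ⟨i, Nat.lt_of_succ_lt h⟩)

/-- The indicator vector of a set. -/
noncomputable def indVec (X : Set α) : α → ℝ := X.indicator 1

/-- `v` is the vertex of the nested set `N` for the weight vector `c`. -/
def IsVertex (M : Matroid α) (B : Set (Set α)) (c : Set α → ℝ) (N : Set (Set α))
    (v : α → ℝ) : Prop :=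
  (∀ X ∈ N, ∑ᶠ a ∈ X, v a = c X) ∧
  ∃ lam mu : Set α → ℝ,
    (∀ X ∈ N \ maxB B, 0 < lam X) ∧
    v = (∑ᶠ X ∈ N \ maxB B, lam X • indVec X) + ∑ᶠ Y ∈ maxB B, mu Y • indVec Y

/-- `c` is cubical: every nested set has a unique vertex. -/
def IsCubical (M : Matroid α) (B : Set (Set α)) (c : Set α → ℝ) : Prop :=
  ∀ N, IsNested M B N → ∃! v, IsVertex M B c N v

/-- Lexicographic comparison of vectors in `ℝ^E`. -/
def lexLt [LinearOrder α] (u v : α → ℝ) : Prop :=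
  ∃ i, u i < v i ∧ ∀ j, j < i → u j = v j

open Classical in
/-- The map `τ_Z`. -/
noncomputable def tau (M : Matroid α) (Z X : Set α) : Set α :=
  if X ⊆ Z then X else M.closure (X ∪ Z) \ Z

/-- `MZ` is the contraction `M ／ Z`. -/
def IsContraction (M MZ : Matroid α) (Z : Set α) : Prop :=
  MZ.E = M.E \ Z ∧
  ∀ I : Set α, MZ.Indep I ↔ I ⊆ M.E \ Z ∧ ∃ J, M.IsBasis J Z ∧ M.Indep (I ∪ J)

set_option linter.unusedSectionVars false

section lemmas

variable [Fintype α] {M : Matroid α} {S T S' T' I J R : Set α} {e : α}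

lemma mrank_bdd (M : Matroid α) (S : Set α) :
    BddAbove {n : ℕ | ∃ I ⊆ S, M.Indep I ∧ I.ncard = n} := by
  refine ⟨Fintype.card α, ?_⟩
  rintro n ⟨I, -, -, rfl⟩
  calc I.ncard ≤ (Set.univ : Set α).ncard := Set.ncard_le_ncard (subset_univ I) finite_univ
    _ = Fintype.card α := by simp [Set.ncard_univ]

lemma mrank_set_nonempty (M : Matroid α) (S : Set α) :
    {n : ℕ | ∃ I ⊆ S, M.Indep I ∧ I.ncard = n}.Nonempty :=
  ⟨0, ∅, empty_subset _, M.empty_indep, by simp⟩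

lemma le_mrank (hIS : I ⊆ S) (hI : M.Indep I) : I.ncard ≤ mrank M S :=
  le_csSup (mrank_bdd M S) ⟨I, hIS, hI, rfl⟩

lemma mrank_le {n : ℕ} (h : ∀ I, I ⊆ S → M.Indep I → I.ncard ≤ n) : mrank M S ≤ n :=
  csSup_le (mrank_set_nonempty M S) (by rintro m ⟨I, hIS, hI, rfl⟩; exact h I hIS hI)

lemma exists_mrank_witness (M : Matroid α) (S : Set α) :
    ∃ I ⊆ S, M.Indep I ∧ I.ncard = mrank M S :=
  Nat.sSup_mem (mrank_set_nonempty M S) (mrank_bdd M S)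

lemma Matroid.IsBasis.mrank_eq (hI : M.IsBasis I S) : mrank M S = I.ncard := by
  refine le_antisymm (mrank_le fun J hJS hJ => ?_) (le_mrank hI.subset hI.indep)
  obtain ⟨J', hJ', hJJ'⟩ := hJ.subset_isBasis_of_subset hJS hI.subset_ground
  have h1 : J.ncard ≤ J'.ncard := Set.ncard_le_ncard hJJ' J'.toFinite
  have h2 : J'.ncard = I.ncard := by
    rw [Set.ncard_def, Set.ncard_def, hJ'.encard_eq_encard hI]
  omega

lemma mrank_indep (hI : M.Indep I) : mrank M I = I.ncard := hI.isBasis_self.mrank_eq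

lemma mrank_closure (hS : S ⊆ M.E) : mrank M (M.closure S) = mrank M S := by
  obtain ⟨I, hI⟩ := M.exists_isBasis S hS
  have h2 : M.IsBasis I (M.closure S) := by
    rw [← hI.closure_eq_closure]; exact hI.indep.isBasis_closure
  rw [h2.mrank_eq, hI.mrank_eq]

lemma mrank_mono (h : S ⊆ T) : mrank M S ≤ mrank M T :=
  csSup_le_csSup (mrank_bdd M T) (mrank_set_nonempty M S)
    (by rintro n ⟨I, hIS, hI, rfl⟩; exact ⟨I, hIS.trans h, hI, rfl⟩)

lemma mrank_union_le : mrank M (S ∪ T) ≤ mrank M S + mrank M T := by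
  refine mrank_le fun I hIS hI => ?_
  have h1 : I = (I ∩ S) ∪ (I ∩ T) := by
    rw [← Set.inter_union_distrib_left, Set.inter_eq_self_of_subset_left hIS]
  calc I.ncard = ((I ∩ S) ∪ (I ∩ T)).ncard := by rw [← h1]
    _ ≤ (I ∩ S).ncard + (I ∩ T).ncard := Set.ncard_union_le _ _
    _ ≤ mrank M S + mrank M T :=
        add_le_add (le_mrank inter_subset_right (hI.subset inter_subset_left))
          (le_mrank inter_subset_right (hI.subset inter_subset_left))

lemma mrank_submod (hS : S ⊆ M.E) (hT : T ⊆ M.E) :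
    mrank M (S ∪ T) + mrank M (S ∩ T) ≤ mrank M S + mrank M T := by
  obtain ⟨I, hI⟩ := M.exists_isBasis (S ∩ T) (inter_subset_left.trans hS)
  obtain ⟨J, hJ, hIJ⟩ := hI.indep.subset_isBasis_of_subset
    (hI.subset.trans (inter_subset_left.trans subset_union_left)) (union_subset hS hT)
  have hJSI : I = J ∩ (S ∩ T) :=
    hI.eq_of_subset_indep (hJ.indep.subset inter_subset_left)
      (subset_inter hIJ hI.subset) inter_subset_right
  have h1 : (J ∩ S) ∪ (J ∩ T) = J := by
    rw [← Set.inter_union_distrib_left, Set.inter_eq_self_of_subset_left hJ.subset]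
  have h2 : (J ∩ S) ∩ (J ∩ T) = J ∩ (S ∩ T) := by ext x; simp; tauto
  have hcalc : (J ∩ S).ncard + (J ∩ T).ncard = J.ncard + I.ncard := by
    rw [← Set.ncard_union_add_ncard_inter (J ∩ S) (J ∩ T), h1, h2, ← hJSI]
  rw [hJ.mrank_eq, hI.mrank_eq, ← hcalc]
  exact add_le_add (le_mrank inter_subset_right (hJ.indep.subset inter_subset_left))
    (le_mrank inter_subset_right (hJ.indep.subset inter_subset_left))

lemma mrank_skew_left (hd : Disjoint S T) (hS : S ⊆ M.E) (hT : T ⊆ M.E)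
    (heq : mrank M (S ∪ T) = mrank M S + mrank M T) (hT' : T' ⊆ T) :
    mrank M (S ∪ T') = mrank M S + mrank M T' := by
  have hsub : mrank M (S ∪ T') ≤ mrank M S + mrank M T' := mrank_union_le
  have hsm := mrank_submod (M := M) (S := S ∪ T') (T := T)
    (union_subset hS (hT'.trans hT)) hT
  have h1 : (S ∪ T') ∪ T = S ∪ T := by
    rw [union_assoc, union_eq_self_of_subset_left hT']
  have h2 : (S ∪ T') ∩ T = T' := by
    rw [Set.union_inter_distrib_right, hd.inter_eq, Set.inter_eq_self_of_subset_left hT',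
      empty_union]
  rw [h1, h2, heq] at hsm
  omega

lemma mrank_skew (hd : Disjoint S T) (hS : S ⊆ M.E) (hT : T ⊆ M.E)
    (heq : mrank M (S ∪ T) = mrank M S + mrank M T) (hS' : S' ⊆ S) (hT' : T' ⊆ T) :
    mrank M (S' ∪ T') = mrank M S' + mrank M T' := by
  have h1 := mrank_skew_left hd hS hT heq hT'
  have h2 := mrank_skew_left (M := M) (S := T') (T := S) (T' := S')
    (hd.symm.mono_left hT') (hT'.trans hT) hS (by rwa [union_comm, add_comm]) hS'
  rwa [union_comm, add_comm] at h2

lemma mrank_restrict (hSR : S ⊆ R) : mrank (M.restrict R) S = mrank M S := by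
  unfold mrank
  congr 1
  ext n
  constructor
  · rintro ⟨I, hIS, hI, rfl⟩
    exact ⟨I, hIS, (Matroid.restrict_indep_iff.1 hI).1, rfl⟩
  · rintro ⟨I, hIS, hI, rfl⟩
    exact ⟨I, hIS, Matroid.restrict_indep_iff.2 ⟨hI, hIS.trans hSR⟩, rfl⟩


lemma closure_flat' (M : Matroid α) (X : Set α) : M.IsFlat (M.closure X) := by
  rw [Matroid.closure_def]
  have hne : Nonempty {F // M.IsFlat F ∧ X ∩ M.E ⊆ F} :=
    ⟨⟨M.E, M.ground_isFlat, inter_subset_right⟩⟩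
  have h := Matroid.IsFlat.iInter (M := M)
    (Fs := fun F : {F // M.IsFlat F ∧ X ∩ M.E ⊆ F} => F.1) (fun F => F.2.1)
  rwa [sInter_eq_iInter]

lemma circuit_closure_conn {C' : Set α} (hM : MLoopless M) (hC' : M.Indep C') (he : e ∈ M.E)
    (heC' : e ∉ C') (hecl : e ∈ M.closure C')
    (hmin : ∀ f ∈ C', e ∉ M.closure (C' \ {f})) :
    MConnected (M.restrict (M.closure (insert e C'))) := by
  set C := insert e C' with hC
  have hC'E : C' ⊆ M.E := hC'.subset_ground
  have hCE : C ⊆ M.E := insert_subset he hC'E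
  set G := M.closure C with hG
  have hGcl : G = M.closure C' := Matroid.closure_insert_eq_of_mem_closure hecl
  have hGE : G ⊆ M.E := M.closure_subset_ground C
  have hCG : C ⊆ G := M.subset_closure C hCE
  have hCdiff : C \ {e} = C' := by
    rw [hC, Set.insert_diff_self_of_notMem heC']
  have hCnotindep : ¬ M.Indep C := by
    intro h
    exact ((M.indep_iff_forall_notMem_closure_diff hCE).1 h (mem_insert e C'))
      (by rwa [hCdiff])
  have hsubindep : ∀ D ⊆ C, D ≠ C → M.Indep D := by
    intro D hDC hne
    obtain ⟨g, hgC, hgD⟩ : ∃ g ∈ C, g ∉ D := by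
      by_contra h
      push_neg at h
      exact hne (hDC.antisymm h)
    rcases eq_or_ne g e with rfl | hge
    · refine hC'.subset fun x hx => ?_
      rcases hDC hx with rfl | hxC'
      · exact absurd hx hgD
      · exact hxC'
    · have hgC' : g ∈ C' := hgC.resolve_left hge
      have h1 : M.Indep (C' \ {g}) := hC'.subset diff_subset
      have hind : M.Indep (insert e (C' \ {g})) := by
        rw [h1.insert_indep_iff_of_notMem (fun h => heC' h.1)]
        exact ⟨he, hmin g hgC'⟩
      refine hind.subset fun x hx => ?_
      rcases hDC hx with rfl | hxC'
      · exact mem_insert _ _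
      · exact mem_insert_of_mem _ ⟨hxC', fun h => hgD (h ▸ hx)⟩
  intro A Bb hunion hdisj hA hB heq
  rw [Matroid.restrict_ground_eq] at hunion
  have hAG : A ⊆ G := hunion ▸ subset_union_left
  have hBG : Bb ⊆ G := hunion ▸ subset_union_right
  rw [Matroid.restrict_ground_eq, mrank_restrict hAG, mrank_restrict hBG,
    mrank_restrict (subset_refl G)] at heq
  have heq' : mrank M (A ∪ Bb) = mrank M A + mrank M Bb := by rw [hunion]; exact heq.symm
  have hskew : ∀ {S' T' : Set α}, S' ⊆ A → T' ⊆ Bb →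
      mrank M (S' ∪ T') = mrank M S' + mrank M T' :=
    fun hS' hT' => mrank_skew hdisj (hAG.trans hGE) (hBG.trans hGE) heq' hS' hT'
  by_cases hCA : (C ∩ A).Nonempty <;> by_cases hCB : (C ∩ Bb).Nonempty
  · have h1 := hskew (inter_subset_right : C ∩ A ⊆ A) (inter_subset_right : C ∩ Bb ⊆ Bb)
    have hUn : (C ∩ A) ∪ (C ∩ Bb) = C := by
      rw [← Set.inter_union_distrib_left, hunion, Set.inter_eq_self_of_subset_left hCG]
    have hiA : M.Indep (C ∩ A) := by
      refine hsubindep _ inter_subset_left fun h => ?_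
      obtain ⟨x, hxC, hxB⟩ := hCB
      have hx2 : x ∈ C ∩ A := by rw [h]; exact hxC
      exact hdisj.ne_of_mem hx2.2 hxB rfl
    have hiB : M.Indep (C ∩ Bb) := by
      refine hsubindep _ inter_subset_left fun h => ?_
      obtain ⟨x, hxC, hxA⟩ := hCA
      have hx2 : x ∈ C ∩ Bb := by rw [h]; exact hxC
      exact hdisj.ne_of_mem hxA hx2.2 rfl
    have hcardsum : (C ∩ A).ncard + (C ∩ Bb).ncard = C.ncard := by
      rw [← Set.ncard_union_eq (hdisj.mono inter_subset_right inter_subset_right), hUn]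
    have hmr : mrank M C = C.ncard := by
      rw [← hUn, h1, mrank_indep hiA, mrank_indep hiB, hcardsum, hUn]
    obtain ⟨I, hIC, hIind, hIcard⟩ := exists_mrank_witness M C
    have hICeq : I = C :=
      Set.eq_of_subset_of_ncard_le hIC (by omega) C.toFinite
    exact hCnotindep (hICeq ▸ hIind)
  · have hCA' : C ⊆ A := by
      intro x hx
      rcases (hunion ▸ hCG hx : x ∈ A ∪ Bb) with h | h
      · exact h
      · exact absurd ⟨x, hx, h⟩ hCB
    obtain ⟨f, hf⟩ := hB
    have h1 := hskew hCA' (singleton_subset_iff.2 hf)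
    have hf1 : mrank M {f} = 1 := by
      rw [mrank_indep (hM f (hGE (hBG hf)))]; simp
    have h2 : mrank M (C ∪ {f}) = mrank M C := by
      refine le_antisymm ?_ (mrank_mono subset_union_left)
      have hsub : C ∪ {f} ⊆ G := union_subset hCG (singleton_subset_iff.2 (hBG hf))
      exact (mrank_mono hsub).trans_eq (by rw [hG, mrank_closure hCE])
    omega
  · have hCB' : C ⊆ Bb := by
      intro x hx
      rcases (hunion ▸ hCG hx : x ∈ A ∪ Bb) with h | h
      · exact absurd ⟨x, hx, h⟩ hCA
      · exact h
    obtain ⟨f, hf⟩ := hA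
    have h1 := hskew (singleton_subset_iff.2 hf) hCB'
    have hf1 : mrank M {f} = 1 := by
      rw [mrank_indep (hM f (hGE (hAG hf)))]; simp
    have h2 : mrank M ({f} ∪ C) = mrank M C := by
      refine le_antisymm ?_ (mrank_mono subset_union_right)
      have hsub : {f} ∪ C ⊆ G := union_subset (singleton_subset_iff.2 (hAG hf)) hCG
      exact (mrank_mono hsub).trans_eq (by rw [hG, mrank_closure hCE])
    omega
  · have : e ∈ A ∪ Bb := hunion ▸ hCG (mem_insert e C')
    rcases this with h | h
    · exact hCA ⟨e, mem_insert e C', h⟩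
    · exact hCB ⟨e, mem_insert e C', h⟩

end lemmas

/-- for an incomparable nested pair, `(X ∨ Z) ∖ Z = X`. -/
theorem nested_incomparable_join_diff {α : Type*} [Fintype α] [LinearOrder α]
    (M : Matroid α) (hM : MLoopless M)
    (B : Set (Set α)) (hB : IsBuildingSet M B)
    (X Z : Set α) (hX : X ∈ B) (hZ : Z ∈ B)
    (hnest : IsNested M B ({X, Z} ∪ maxB B))
    (h1 : ¬ X ⊆ Z) (h2 : ¬ Z ⊆ X) :
    M.closure (X ∪ Z) \ Z = X := by
  obtain ⟨hBflat, hBconn, hBjoin⟩ := hB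
  have hXflat : M.IsFlat X := (hBflat X hX).1
  have hZflat : M.IsFlat Z := (hBflat Z hZ).1
  have hXE : X ⊆ M.E := hXflat.subset_ground
  have hZE : Z ⊆ M.E := hZflat.subset_ground
  have hXZE : X ∪ Z ⊆ M.E := union_subset hXE hZE
  obtain ⟨hNB, hmaxN, hkey⟩ := hnest
  have hXZne : X ≠ Z := fun h => h1 (h ▸ subset_rfl)
  -- F = cl(X ∪ Z) is not in B
  have hFnotB : M.closure (X ∪ Z) ∉ B := by
    have h := hkey {X, Z} (subset_union_left.trans' (subset_refl _))
      (Set.nontrivial_pair hXZne) ?_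
    · rwa [Set.sUnion_pair] at h
    · intro a ha b hb hab
      rcases ha with rfl | ha <;> rcases hb with rfl | hb
      · exact absurd rfl hab
      · rw [mem_singleton_iff] at hb; subst hb; exact ⟨h1, h2⟩
      · rw [mem_singleton_iff] at ha; subst ha; exact ⟨h2, h1⟩
      · rw [mem_singleton_iff] at ha hb; subst ha; subst hb; exact absurd rfl hab
  -- X and Z are disjoint
  have hdisjXZ : X ∩ Z = ∅ := by
    by_contra h
    exact hFnotB (hBjoin X hX Z hZ (nonempty_iff_ne_empty.2 h))
  apply Set.Subset.antisymm
  · -- hard direction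
    rintro e ⟨heF, heZ⟩
    by_contra heX
    have heXZ : e ∉ X ∪ Z := fun h => h.elim heX heZ
    have heE : e ∈ M.E := M.closure_subset_ground _ heF
    obtain ⟨I₀, hI₀⟩ := M.exists_isBasis (X ∪ Z) hXZE
    have heI₀ : e ∈ M.closure I₀ := by rw [hI₀.closure_eq_closure]; exact heF
    set s : Set ℕ := {k | ∃ D ⊆ I₀, e ∈ M.closure D ∧ D.ncard = k} with hs
    have hsne : s.Nonempty := ⟨I₀.ncard, I₀, subset_rfl, heI₀, rfl⟩
    obtain ⟨C', hC'I₀, heC'cl, hcard⟩ := Nat.sInf_mem hsne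
    have hmin : ∀ f ∈ C', e ∉ M.closure (C' \ {f}) := by
      intro f hf hcon
      have hmem : (C' \ {f}).ncard ∈ s := ⟨C' \ {f}, diff_subset.trans hC'I₀, hcon, rfl⟩
      have hle := Nat.sInf_le hmem
      have hpos : 0 < C'.ncard := (Set.ncard_pos C'.toFinite).2 ⟨f, hf⟩
      rw [Set.ncard_diff_singleton_of_mem hf] at hle
      omega
    have hC'XZ : C' ⊆ X ∪ Z := hC'I₀.trans hI₀.subset
    have hC'indep : M.Indep C' := hI₀.indep.subset hC'I₀
    have heC' : e ∉ C' := fun h => heXZ (hC'XZ h)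
    -- C' meets both X and Z
    have hC'X : (C' ∩ X).Nonempty := by
      rw [nonempty_iff_ne_empty]
      intro h
      have hC'Z : C' ⊆ Z := fun x hx => (hC'XZ hx).resolve_left
        (fun hxX => (Set.eq_empty_iff_forall_notMem.1 h x) ⟨hx, hxX⟩)
      exact heZ (hZflat.closure ▸ M.closure_subset_closure hC'Z heC'cl)
    have hC'Z : (C' ∩ Z).Nonempty := by
      rw [nonempty_iff_ne_empty]
      intro h
      have hC'X' : C' ⊆ X := fun x hx => (hC'XZ hx).resolve_right
        (fun hxZ => (Set.eq_empty_iff_forall_notMem.1 h x) ⟨hx, hxZ⟩)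
      exact heX (hXflat.closure ▸ M.closure_subset_closure hC'X' heC'cl)
    -- G = closure of the circuit insert e C' is a connected flat, hence in B
    set G := M.closure (insert e C') with hGdef
    have hGconn : MConnected (M.restrict G) :=
      circuit_closure_conn hM hC'indep heE heC' heC'cl hmin
    have hGne : G.Nonempty := ⟨e, M.subset_closure _ (insert_subset heE hC'indep.subset_ground)
      (mem_insert e C')⟩
    have hGB : G ∈ B := hBconn G (closure_flat' M _) hGne hGconn
    have hC'G : C' ⊆ G := (M.subset_closure _ (insert_subset heE hC'indep.subset_ground)).trans'
      (subset_insert e C')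
    -- H = cl(X ∪ G) ∈ B
    obtain ⟨x, hxC', hxX⟩ := hC'X
    have hXGne : (X ∩ G).Nonempty := ⟨x, hxX, hC'G hxC'⟩
    have hHB : M.closure (X ∪ G) ∈ B := hBjoin X hX G hGB hXGne
    set H := M.closure (X ∪ G) with hHdef
    -- H meets Z
    obtain ⟨z, hzC', hzZ⟩ := hC'Z
    have hHZne : (H ∩ Z).Nonempty :=
      ⟨z, M.subset_closure _ (union_subset hXE (M.closure_subset_ground _))
        (Or.inr (hC'G hzC')), hzZ⟩
    have hfinal : M.closure (H ∪ Z) ∈ B := hBjoin H hHB Z hZ hHZne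
    -- but cl(H ∪ Z) = cl(X ∪ Z)
    have hCsub : insert e C' ⊆ M.closure (X ∪ Z) :=
      insert_subset heF (hC'XZ.trans (M.subset_closure _ hXZE))
    have hGsub : G ⊆ M.closure (X ∪ Z) := by
      rw [hGdef, ← M.closure_closure (X ∪ Z)]
      exact M.closure_subset_closure hCsub
    have hHsub : H ⊆ M.closure (X ∪ Z) := by
      rw [hHdef, ← M.closure_closure (X ∪ Z)]
      exact M.closure_subset_closure
        (union_subset ((M.subset_closure _ hXZE).trans' subset_union_left) hGsub)
    have hXH : X ⊆ H := (M.subset_closure _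
      (union_subset hXE (M.closure_subset_ground _))).trans' subset_union_left
    have heqF : M.closure (H ∪ Z) = M.closure (X ∪ Z) := by
      apply Set.Subset.antisymm
      · rw [← M.closure_closure (X ∪ Z)]
        exact M.closure_subset_closure
          (union_subset hHsub ((M.subset_closure _ hXZE).trans' subset_union_right))
      · exact M.closure_subset_closure (union_subset_union_left Z hXH)
    exact hFnotB (heqF ▸ hfinal)
  · -- easy direction
    intro x hx
    refine ⟨M.subset_closure _ hXZE (Or.inl hx), fun hxZ => ?_⟩
    exact (Set.eq_empty_iff_forall_notMem.1 hdisjXZ x) ⟨hx, hxZ⟩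
end

section
/- Let M be a loopless matroid on a finite linearly ordered ground set E, B a building set for M, and N a nested set. Then the labeling map X ↦ m_N(X) is injective on N: if X, X′ ∈ N with X ≠ X′, then m_N(X) ≠ m_N(X′). -/
open Set Matroid
open scoped Matroid

variable {α : Type*}

/-- the labeling `X ↦ m_N(X)` is injective on a nested set `N`. -/
theorem label_injective {α : Type*} [Fintype α] [LinearOrder α]
    (M : Matroid α) (hM : MLoopless M)
    (B : Set (Set α)) (hB : IsBuildingSet M B)
    (N : Set (Set α)) (hN : IsNested M B N)
    (X X' A A' : Set α) (hX : X ∈ N) (hX' : X' ∈ N) (hne : X ≠ X')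
    (hA : IsMinLabel M N X A) (hA' : IsMinLabel M N X' A') :
    A ≠ A' := by
  intro heq
  subst heq
  obtain ⟨⟨hAatom, hAX, hAmin⟩, _⟩ := hA
  obtain ⟨⟨_, hAX', hAmin'⟩, _⟩ := hA'
  -- X and X' are incomparable
  have hns : ¬ X ⊆ X' := fun h => hAmin' X hX ⟨h, fun h' => hne (h.antisymm h')⟩ hAX
  have hns' : ¬ X' ⊆ X := fun h => hAmin X' hX' ⟨h, fun h' => hne.symm (h.antisymm h')⟩ hAX'
  -- A is nonempty
  have hAne : A.Nonempty := by
    rw [Set.nonempty_iff_ne_empty]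
    intro hAe
    have : mrank M A = 0 := by
      have : {n : ℕ | ∃ I ⊆ A, M.Indep I ∧ I.ncard = n} = {0} := by
        ext n
        simp only [Set.mem_setOf_eq, Set.mem_singleton_iff, hAe]
        constructor
        · rintro ⟨I, hIe, -, rfl⟩
          rw [Set.subset_empty_iff] at hIe
          simp [hIe]
        · rintro rfl
          exact ⟨∅, Set.Subset.rfl, M.empty_indep, Set.ncard_empty _⟩
      rw [mrank, this, csSup_singleton]
    rw [hAatom.2] at this
    exact one_ne_zero this
  -- X ∩ X' nonempty
  have hint : (X ∩ X').Nonempty := hAne.mono (Set.subset_inter hAX hAX')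
  have hjoin : M.closure (X ∪ X') ∈ B := hB.2.2 X (hN.1 hX) X' (hN.1 hX') hint
  have hnot : M.closure (⋃₀ {X, X'}) ∉ B := by
    refine hN.2.2 {X, X'} ?_ ?_ ?_
    · intro Y hY
      rcases hY with rfl | rfl
      · exact hX
      · exact hX'
    · exact ⟨X, Set.mem_insert _ _, X', Set.mem_insert_of_mem _ rfl, hne⟩
    · intro Y hY Z hZ hYZ
      rcases hY with rfl | rfl <;> rcases hZ with rfl | rfl
      · exact absurd rfl hYZ
      · exact ⟨hns, hns'⟩
      · exact ⟨hns', hns⟩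
      · exact absurd rfl hYZ
  rw [Set.sUnion_pair] at hnot
  exact hnot hjoin
end
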